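/- arXiv:1501.06955 — 2 statements merged into one kernel-verified Lean document; each statement's English description precedes it below -/
import Mathlib

section
/- Let n ≥ 3, μ ∈ ℂ, and let a ∈ ℂⁿ with H(a) = μ, with extended Hurwitz map φ = φ_a. Then log⁺|φ| has an upper Fibonacci bound on 𝒜: there exist constants K > 0 and C > 0 such that log⁺|φ(γ)| ≤ K·F(γ) + C for all γ ∈ 𝒜. -/
open scoped BigOperators

noncomputable section

namespace MarkoffHurwitz

/-- The Markoff–Hurwitz polynomial `H(x) = x₁² + ⋯ + xₙ² − x₁⋯xₙ`. -/
def MH (n : ℕ) (x : Fin n → ℂ) : ℂ := (∑ i, x i ^ 2) - ∏ i, x i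

/-- The involution `bᵢ` replacing `xᵢ` by `(∏_{j≠i} x_j) − xᵢ`. -/
def bmap (n : ℕ) (i : Fin n) (x : Fin n → ℂ) : Fin n → ℂ :=
  Function.update x i ((∏ j ∈ Finset.univ.erase i, x j) - x i)

lemma bmap_apply_ne (n : ℕ) (i : Fin n) (x : Fin n → ℂ) {j : Fin n} (h : j ≠ i) :
    bmap n i x j = x j := Function.update_of_ne h _ _

lemma bmap_apply_same (n : ℕ) (i : Fin n) (x : Fin n → ℂ) :
    bmap n i x i = (∏ j ∈ Finset.univ.erase i, x j) - x i := Function.update_self _ _ _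

lemma prod_erase_bmap (n : ℕ) (i : Fin n) (x : Fin n → ℂ) :
    ∏ j ∈ Finset.univ.erase i, bmap n i x j = ∏ j ∈ Finset.univ.erase i, x j :=
  Finset.prod_congr rfl fun j hj => bmap_apply_ne n i x (Finset.ne_of_mem_erase hj)

lemma bmap_involutive (n : ℕ) (i : Fin n) : Function.Involutive (bmap n i) := by
  intro x; funext j
  rcases eq_or_ne j i with rfl | h
  · rw [bmap_apply_same, prod_erase_bmap, bmap_apply_same]; ring
  · rw [bmap_apply_ne n i _ h, bmap_apply_ne n i x h]

/-- The relators `bᵢ²` of the Coxeter presentation. -/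
def MHrels (n : ℕ) : Set (FreeGroup (Fin n)) :=
  Set.range fun i : Fin n => FreeGroup.of i * FreeGroup.of i

/-- The group `Γₙ = ⟨b₁,…,bₙ ∣ bᵢ² = 1⟩`, free product of `n` copies of `ℤ/2`. -/
abbrev Gam (n : ℕ) := PresentedGroup (MHrels n)

/-- The generator `bᵢ` as an element of `Γₙ`. -/
def gen {n : ℕ} (i : Fin n) : Gam n := PresentedGroup.of i

lemma gen_mul_self {n : ℕ} (i : Fin n) : gen i * gen i = 1 := by
  have h : PresentedGroup.mk (MHrels n) (FreeGroup.of i * FreeGroup.of i) = 1 := by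
    have : (FreeGroup.of i * FreeGroup.of i) ∈ Subgroup.normalClosure (MHrels n) :=
      Subgroup.subset_normalClosure ⟨i, rfl⟩
    exact (QuotientGroup.eq_one_iff _).2 this
  simpa [gen, PresentedGroup.of, map_mul] using h

lemma gen_inv {n : ℕ} (i : Fin n) : (gen i)⁻¹ = gen i :=
  inv_eq_of_mul_eq_one_right (gen_mul_self i)

/-- `bᵢ` as a permutation of `ℂⁿ`. -/
def bperm (n : ℕ) (i : Fin n) : Equiv.Perm (Fin n → ℂ) := (bmap_involutive n i).toPerm

/-- The action of `Γₙ` on `ℂⁿ` by the involutions `bᵢ`. -/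
def act (n : ℕ) : Gam n →* Equiv.Perm (Fin n → ℂ) :=
  PresentedGroup.toGroup (f := fun i => bperm n i) (by
    rintro r ⟨i, rfl⟩
    rw [map_mul, FreeGroup.lift_apply_of]
    refine Equiv.ext fun x => ?_
    simpa [bperm, Equiv.Perm.mul_apply] using bmap_involutive n i x)

lemma act_gen (n : ℕ) (i : Fin n) : act n (gen i) = bperm n i :=
  PresentedGroup.toGroup.of _

/-- The subgroup `⟨bᵢ, b_j⟩` associated to an unordered pair `{i,j}`. -/
def pairSub {n : ℕ} : Sym2 (Fin n) → Subgroup (Gam n) :=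
  Sym2.lift ⟨fun i j => Subgroup.closure {gen i, gen j}, fun i j => by
    show Subgroup.closure {gen i, gen j} = Subgroup.closure {gen j, gen i}
    rw [Set.pair_comm]⟩

lemma pairSub_mk {n : ℕ} (i j : Fin n) :
    pairSub s(i, j) = Subgroup.closure {gen i, gen j} := rfl

/-- An alternating geodesic in the Cayley tree of `Γₙ`: an unordered pair `{i,j}`
of distinct colors together with a coset `g⟨bᵢ,b_j⟩`. -/
structure AltGeo (n : ℕ) where
  pair : Sym2 (Fin n)
  nd : ¬ pair.IsDiag
  coset : Gam n ⧸ pairSub pair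

/-- Coordinates outside of a pair `{i,j}`. -/
def offPair {n : ℕ} (s : Sym2 (Fin n)) : Finset (Fin n) :=
  Finset.univ.filter fun k => ¬ k ∈ s

/-- Key invariance: the coordinates off the pair do not change when moving along the coset. -/
lemma coords_eq {n : ℕ} (a : Fin n → ℂ) (s : Sym2 (Fin n)) {t : Gam n}
    (ht : t ∈ pairSub s) (g : Gam n) {k : Fin n} (hk : ¬ k ∈ s) :
    act n (g * t)⁻¹ a k = act n g⁻¹ a k := by
  induction s using Sym2.ind with
  | _ i j =>
    rw [pairSub_mk] at ht
    induction ht using Subgroup.closure_induction generalizing g with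
    | mem x hx =>
      have key : ∀ m : Fin n, m ∈ (s(i, j) : Sym2 (Fin n)) → ∀ g : Gam n,
          act n (g * gen m)⁻¹ a k = act n g⁻¹ a k := by
        intro m hm g
        rw [mul_inv_rev, gen_inv, map_mul, Equiv.Perm.mul_apply, act_gen]
        have hkm : k ≠ m := fun h => hk (h ▸ hm)
        exact bmap_apply_ne n m _ hkm
      rcases hx with rfl | rfl
      · exact key i (Sym2.mem_mk_left i j) g
      · exact key j (Sym2.mem_mk_right i j) g
    | one => rw [mul_one]
    | mul x y hx hy ihx ihy => rw [← mul_assoc]; rw [ihy, ihx]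
    | inv x hx ih =>
      have := ih (g := g * x⁻¹)
      rw [mul_assoc, inv_mul_cancel, mul_one] at this
      exact this.symm

/-- Representative version of the extended Hurwitz map. -/
def phiRep (n : ℕ) (a : Fin n → ℂ) (s : Sym2 (Fin n)) (g : Gam n) : ℂ :=
  ∏ k ∈ offPair s, act n g⁻¹ a k

/-- Representative version of the square sum weight. -/
def sigRep (n : ℕ) (a : Fin n → ℂ) (s : Sym2 (Fin n)) (g : Gam n) : ℂ :=
  ∑ k ∈ offPair s, (act n g⁻¹ a k) ^ 2

/-- The extended Hurwitz map `φ_a : 𝒜 → ℂ`, `φ(γ) = ∏_{k∉{i,j}} x_k`. -/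
def phiA (n : ℕ) (a : Fin n → ℂ) (γ : AltGeo n) : ℂ :=
  Quotient.liftOn' γ.coset (phiRep n a γ.pair) (by
    intro g h hgh
    have hmem : g⁻¹ * h ∈ pairSub γ.pair := QuotientGroup.leftRel_apply.mp hgh
    have : h = g * (g⁻¹ * h) := by group
    rw [this]
    unfold phiRep
    exact (Finset.prod_congr rfl fun k hk =>
      (coords_eq a γ.pair hmem g (Finset.mem_filter.mp hk).2)).symm)

/-- The square sum weight `σ_a : 𝒜 → ℂ`, `σ(γ) = ∑_{k∉{i,j}} x_k²`. -/
def sigA (n : ℕ) (a : Fin n → ℂ) (γ : AltGeo n) : ℂ :=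
  Quotient.liftOn' γ.coset (sigRep n a γ.pair) (by
    intro g h hgh
    have hmem : g⁻¹ * h ∈ pairSub γ.pair := QuotientGroup.leftRel_apply.mp hgh
    have : h = g * (g⁻¹ * h) := by group
    rw [this]
    unfold sigRep
    exact (Finset.sum_congr rfl fun k hk => by
      rw [coords_eq a γ.pair hmem g (Finset.mem_filter.mp hk).2]).symm)

/-- The set `𝒜_φ(K)` of alternating geodesics with `|φ(γ)| ≤ K`. -/
def AK (n : ℕ) (a : Fin n → ℂ) (K : ℝ) : Set (AltGeo n) :=
  {γ | ‖phiA n a γ‖ ≤ K}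

/-- The Bowditch domain `𝒟 ⊆ ℂⁿ`. -/
def BD (n : ℕ) : Set (Fin n → ℂ) :=
  {a | (∀ γ : AltGeo n, phiA n a γ ∉ (fun r : ℝ => (r : ℂ)) '' Set.Icc (-2 : ℝ) 2) ∧
    ∃ K : ℝ, 2 < K ∧ (AK n a K).Finite}



/-- Word length of `g ∈ Γₙ` with respect to the generators `b₁,…,bₙ`. -/
def glen (n : ℕ) (g : Gam n) : ℕ :=
  sInf {m | ∃ l : List (Fin n), l.length = m ∧ g = (l.map gen).prod}

/-- The alternating geodesic `[g;{i,k}]` through the vertex `g` with colors `{i,k}`. -/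
def mkGeo {n : ℕ} (i k : Fin n) (h : i ≠ k) (g : Gam n) : AltGeo n :=
  ⟨s(i, k), by rwa [Sym2.mk_isDiag_iff], QuotientGroup.mk g⟩

/-- `F : 𝒜 → ℕ` is the Fibonacci function relative to the root `v₀ = 1`:
`F(γ) = 1` if the root lies on `γ`, and otherwise `F(γ) = F([v*;{i,k}]) + F([v*;{j,k}])`,
where `v*` is the vertex of `γ` closest to the root and `k` is the label of the first
edge of the geodesic from `v*` to the root. -/
def IsFib (n : ℕ) (F : AltGeo n → ℕ) : Prop :=
  (∀ γ : AltGeo n, γ.coset = QuotientGroup.mk 1 → F γ = 1) ∧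
  (∀ γ : AltGeo n, γ.coset ≠ QuotientGroup.mk 1 →
    ∀ g : Gam n, QuotientGroup.mk g = γ.coset →
      (∀ h : Gam n, QuotientGroup.mk h = γ.coset → glen n g ≤ glen n h) →
      ∀ i j k : Fin n, γ.pair = s(i, j) → ∀ (hki : k ≠ i) (hkj : k ≠ j),
        glen n (g * gen k) < glen n g →
        F γ = F (mkGeo i k hki.symm g) + F (mkGeo j k hkj.symm g))

/-- `log⁺ t = max (0, log t)`. -/
def logp (t : ℝ) : ℝ := max 0 (Real.log t)

/-- The subgroup `⟨b_j : j ≠ i⟩`. -/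
def hatSub (n : ℕ) (i : Fin n) : Subgroup (Gam n) :=
  Subgroup.closure {g | ∃ j : Fin n, j ≠ i ∧ g = gen j}

lemma coord_eq (n : ℕ) (a : Fin n → ℂ) (i : Fin n) {t : Gam n}
    (ht : t ∈ hatSub n i) (g : Gam n) :
    act n (g * t)⁻¹ a i = act n g⁻¹ a i := by
  induction ht using Subgroup.closure_induction generalizing g with
  | mem x hx =>
    obtain ⟨j, hji, rfl⟩ := hx
    rw [mul_inv_rev, gen_inv, map_mul, Equiv.Perm.mul_apply, act_gen]
    exact bmap_apply_ne n j _ hji.symm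
  | one => rw [mul_one]
  | mul x y hx hy ihx ihy => rw [← mul_assoc, ihy, ihx]
  | inv x hx ih =>
    have := ih (g := g * x⁻¹)
    rw [mul_assoc, inv_mul_cancel, mul_one] at this
    exact this.symm

/-- For a coset `X = g⟨b_j : j ≠ i⟩ ∈ 𝒳ᵢ`, the (constant) `i`-th coordinate `φ(X)`. -/
def coordX (n : ℕ) (a : Fin n → ℂ) (i : Fin n) (X : Gam n ⧸ hatSub n i) : ℂ :=
  Quotient.liftOn' X (fun g => act n g⁻¹ a i) (by
    intro g h hgh
    have hmem : g⁻¹ * h ∈ hatSub n i := QuotientGroup.leftRel_apply.mp hgh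
    have hh : h = g * (g⁻¹ * h) := by group
    show act n g⁻¹ a i = act n h⁻¹ a i
    rw [hh, coord_eq n a i hmem g])

/-- `a ∈ ℂⁿ` is dihedral if some point of its `Γₙ`-orbit has two vanishing coordinates. -/
def Dihedral (n : ℕ) (a : Fin n → ℂ) : Prop :=
  ∃ (g : Gam n) (i j : Fin n), i ≠ j ∧ act n g a i = 0 ∧ act n g a j = 0

/-- The alternating geodesic `γ` contains the edge of color `i` incident to the vertex `g`. -/
def containsEdge {n : ℕ} (γ : AltGeo n) (g : Gam n) (i : Fin n) : Prop :=
  i ∈ γ.pair ∧ (QuotientGroup.mk g : Gam n ⧸ pairSub γ.pair) = γ.coset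

/-- Two alternating geodesics share an edge of the tree. -/
def ShareEdge {n : ℕ} (α β : AltGeo n) : Prop :=
  ∃ (g : Gam n) (i : Fin n), containsEdge α g i ∧ containsEdge β g i

/-- A set of alternating geodesics is edge-connected. -/
def EdgeConnected {n : ℕ} (P : Set (AltGeo n)) : Prop :=
  ∀ α ∈ P, ∀ β ∈ P, ∃ (m : ℕ) (c : ℕ → AltGeo n),
    c 0 = α ∧ c m = β ∧ (∀ t ≤ m, c t ∈ P) ∧ ∀ t < m, ShareEdge (c t) (c (t + 1))

/-- `h(z) = 1 − √(1 − 4/z²)`, with the principal square root (positive real part). -/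
def hfun (z : ℂ) : ℂ := 1 - (1 - 4 / z ^ 2) ^ ((1 : ℂ) / 2)

/-! Since `bₖ` replaces `xₖ` by `∏_{m≠k} xₘ − xₖ`, at every vertex `g` and for distinct
colours `i, j, k` the values of `φ` satisfy the vertex relation
`φ[g;{i,j}] + φ[g bₖ;{i,j}] = φ[g;{i,k}] · φ[g;{j,k}]`. Hence
`log⁺|φ[g;{i,j}]| ≤ max (log⁺|φ[g;{i,k}]| + log⁺|φ[g;{j,k}]|) (log⁺|φ[g bₖ;{i,j}]|) + log 2`.
Walking away from the root, the first term is matched by the Fibonacci recursion and the second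
by the strict inequality `F[g bₖ;{i,j}] < F[g bₖ;{i,k}] + F[g bₖ;{j,k}]`, so induction on the
reduced word of `g` gives `log⁺|φ| ≤ K F − log 2` with `K = log 2 + ∑ₘ log⁺|aₘ|`. -/

open Real

lemma posLog_add_le_max {x y : ℝ} (hx : 0 ≤ x) (hy : 0 ≤ y) :
    log⁺ (x + y) ≤ max (log⁺ x) (log⁺ y) + log 2 := by
  wlog hxy : x ≤ y generalizing x y
  · simpa [add_comm, max_comm] using this hy hx (le_of_not_ge hxy)
  calc log⁺ (x + y) ≤ log⁺ (2 * y) := posLog_le_posLog (by positivity) (by linarith)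
    _ ≤ log 2 + log⁺ y := by exact_mod_cast posLog_nat_mul (n := 2)
    _ ≤ max (log⁺ x) (log⁺ y) + log 2 := by linarith [le_max_right (log⁺ x) (log⁺ y)]

lemma posLog_norm_le_of_add_eq_mul {R : Type*} [SeminormedRing R] {z z' w w' : R}
    (h : z + z' = w * w') :
    log⁺ ‖z‖ ≤ max (log⁺ ‖w‖ + log⁺ ‖w'‖) (log⁺ ‖z'‖) + log 2 := by
  have hz : ‖z‖ ≤ ‖w‖ * ‖w'‖ + ‖z'‖ := by
    rw [eq_sub_of_add_eq h]
    exact (norm_sub_le _ _).trans (add_le_add (norm_mul_le _ _) le_rfl)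
  calc log⁺ ‖z‖ ≤ log⁺ (‖w‖ * ‖w'‖ + ‖z'‖) := posLog_le_posLog (norm_nonneg _) hz
    _ ≤ max (log⁺ (‖w‖ * ‖w'‖)) (log⁺ ‖z'‖) + log 2 :=
      posLog_add_le_max (by positivity) (norm_nonneg _)
    _ ≤ max (log⁺ ‖w‖ + log⁺ ‖w'‖) (log⁺ ‖z'‖) + log 2 := by gcongr; exact posLog_mul

section NormalForm

variable {n : ℕ}

def cancelCons (k : Fin n) : List (Fin n) → List (Fin n)
  | [] => [k]
  | m :: l => if m = k then l else k :: m :: l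

lemma isChain_cancelCons (k : Fin n) {l : List (Fin n)} (hl : l.IsChain (· ≠ ·)) :
    (cancelCons k l).IsChain (· ≠ ·) := by
  cases l with
  | nil => exact List.isChain_singleton k
  | cons m l =>
    by_cases hmk : m = k
    · simpa [cancelCons, hmk] using hl.tail
    · simpa [cancelCons, hmk, List.isChain_cons_cons, Ne.symm hmk] using hl

lemma cancelCons_cancelCons (k : Fin n) {l : List (Fin n)} (hl : l.IsChain (· ≠ ·)) :
    cancelCons k (cancelCons k l) = l := by
  rcases l with _ | ⟨m, _ | ⟨m', l⟩⟩
  · simp [cancelCons]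
  · by_cases hmk : m = k <;> simp [cancelCons, hmk]
  · by_cases hmk : m = k
    · have : m' ≠ k := hmk ▸ (List.isChain_cons_cons.mp hl).1.symm
      simp [cancelCons, hmk, this]
    · simp [cancelCons, hmk]

lemma prod_map_gen_cancelCons (k : Fin n) (l : List (Fin n)) :
    ((cancelCons k l).map gen).prod = gen k * (l.map gen).prod := by
  cases l with
  | nil => simp [cancelCons]
  | cons m l =>
    by_cases hmk : m = k
    · simp [cancelCons, hmk, ← mul_assoc, gen_mul_self]
    · simp [cancelCons, hmk]

lemma mem_cancelCons {k m : Fin n} {l : List (Fin n)} (h : m ∈ cancelCons k l) :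
    m = k ∨ m ∈ l := by
  cases l with
  | nil => simpa [cancelCons] using h
  | cons m' l =>
    by_cases hmk : m' = k
    · simp only [cancelCons, hmk, if_true] at h
      exact Or.inr (List.mem_cons_of_mem _ h)
    · simpa [cancelCons, hmk] using h

abbrev RedWord (n : ℕ) := {l : List (Fin n) // l.IsChain (· ≠ ·)}

def cancelConsPerm (k : Fin n) : Equiv.Perm (RedWord n) :=
  Function.Involutive.toPerm (fun w => ⟨cancelCons k w.1, isChain_cancelCons k w.2⟩)
    fun w => Subtype.ext (cancelCons_cancelCons k w.2)

/-- van der Waerden's trick: letting `Γₙ` act on reduced words makes normal forms unique. -/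
def wordAct (n : ℕ) : Gam n →* Equiv.Perm (RedWord n) :=
  PresentedGroup.toGroup (f := cancelConsPerm) (by
    rintro r ⟨k, rfl⟩
    rw [map_mul, FreeGroup.lift_apply_of]
    exact Equiv.ext fun w => Subtype.ext (cancelCons_cancelCons k w.2))

def nf (g : Gam n) : List (Fin n) := (wordAct n g ⟨[], List.isChain_nil⟩).1

lemma isChain_nf (g : Gam n) : (nf g).IsChain (· ≠ ·) := (wordAct n g _).2

lemma nf_one : nf (1 : Gam n) = [] := rfl

lemma nf_gen_mul (k : Fin n) (g : Gam n) : nf (gen k * g) = cancelCons k (nf g) := by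
  simp only [nf, map_mul, Equiv.Perm.mul_apply, gen]
  rw [wordAct, PresentedGroup.toGroup.of]
  rfl

lemma nf_prod_map_gen {l : List (Fin n)} (hl : l.IsChain (· ≠ ·)) :
    nf (l.map gen).prod = l := by
  induction l with
  | nil => exact nf_one
  | cons k l ih =>
    rw [List.map_cons, List.prod_cons, nf_gen_mul, ih hl.tail]
    cases l with
    | nil => rfl
    | cons m l => simp [cancelCons, (List.isChain_cons_cons.mp hl).1.symm]

lemma closure_gen_induction {S : Set (Fin n)} {P : Gam n → Prop} (one : P 1)
    (gen_mul : ∀ k ∈ S, ∀ g, P g → P (gen k * g)) {g : Gam n}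
    (hg : g ∈ Subgroup.closure (gen '' S)) : P g := by
  induction hg using Subgroup.closure_induction_left with
  | one => exact one
  | mul_left _ hx y _ ih =>
    obtain ⟨k, hk, rfl⟩ := hx
    exact gen_mul k hk y ih
  | inv_mul_cancel _ hx y _ ih =>
    obtain ⟨k, hk, rfl⟩ := hx
    rw [gen_inv]
    exact gen_mul k hk y ih

lemma mem_closure_gen_univ (g : Gam n) : g ∈ Subgroup.closure (gen '' Set.univ) := by
  rw [Set.image_univ, show Set.range gen = Set.range (PresentedGroup.of (rels := MHrels n)) from
    rfl, PresentedGroup.closure_range_of]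
  exact Subgroup.mem_top g

lemma prod_map_gen_nf (g : Gam n) : ((nf g).map gen).prod = g := by
  refine closure_gen_induction (P := fun g => ((nf g).map gen).prod = g) rfl
    (fun k _ g ih => ?_) (mem_closure_gen_univ g)
  rw [nf_gen_mul, prod_map_gen_cancelCons, ih]

lemma eq_one_of_nf_eq_nil {g : Gam n} (h : nf g = []) : g = 1 := by
  rw [← prod_map_gen_nf g, h, List.map_nil, List.prod_nil]

lemma length_nf_prod_map_gen_le (l : List (Fin n)) :
    (nf (l.map gen).prod).length ≤ l.length := by
  induction l with
  | nil => exact le_rfl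
  | cons k l ih =>
    rw [List.map_cons, List.prod_cons, nf_gen_mul, List.length_cons]
    cases h : nf (l.map gen).prod with
    | nil => simp [cancelCons]
    | cons m l' =>
      rw [h] at ih
      by_cases hmk : m = k <;> simp [cancelCons, hmk] at ih ⊢ <;> omega

lemma glen_eq_length_nf (g : Gam n) : glen n g = (nf g).length := by
  refine le_antisymm (Nat.sInf_le ⟨nf g, rfl, (prod_map_gen_nf g).symm⟩) ?_
  refine le_csInf ⟨_, nf g, rfl, (prod_map_gen_nf g).symm⟩ ?_
  rintro _ ⟨l, rfl, rfl⟩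
  exact length_nf_prod_map_gen_le l

lemma mem_of_mem_nf {S : Set (Fin n)} {t : Gam n} (ht : t ∈ Subgroup.closure (gen '' S))
    {m : Fin n} (hm : m ∈ nf t) : m ∈ S := by
  refine closure_gen_induction (P := fun t => ∀ m ∈ nf t, m ∈ S) (by simp [nf_one])
    (fun k hk t ih m hm => ?_) ht m hm
  rw [nf_gen_mul] at hm
  rcases mem_cancelCons hm with rfl | hm
  exacts [hk, ih m hm]

/-- A reduced word ending in a letter outside `S` stays reduced when followed by a word in `S`. -/
lemma nf_mul_of_mem_closure {S : Set (Fin n)} {g t : Gam n} {w : List (Fin n)} {k : Fin n}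
    (hg : nf g = w ++ [k]) (hk : k ∉ S) (ht : t ∈ Subgroup.closure (gen '' S)) :
    nf (g * t) = nf g ++ nf t := by
  have hred : (nf g ++ nf t).IsChain (· ≠ ·) := by
    refine (isChain_nf g).append (isChain_nf t) fun x hx y hy => ?_
    rw [hg, List.getLast?_concat, Option.mem_some_iff] at hx
    rintro rfl
    exact hk (hx ▸ mem_of_mem_nf ht (List.mem_of_mem_head? hy))
  conv_lhs =>
    rw [← prod_map_gen_nf g, ← prod_map_gen_nf t, ← List.prod_append, ← List.map_append]
  exact nf_prod_map_gen hred

lemma nf_mul_gen_of_nf_eq {g : Gam n} {w : List (Fin n)} {k : Fin n} (hg : nf g = w ++ [k]) :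
    nf (g * gen k) = w := by
  have hw : w.IsChain (· ≠ ·) := (hg ▸ isChain_nf g).left_of_append
  rw [← prod_map_gen_nf g, hg, List.map_append, List.prod_append, List.map_singleton,
    List.prod_singleton, mul_assoc, gen_mul_self, mul_one, nf_prod_map_gen hw]

lemma getLast?_nf_mul_gen_ne {g : Gam n} {w : List (Fin n)} {k : Fin n}
    (hg : nf g = w ++ [k]) : (nf (g * gen k)).getLast? ≠ some k := by
  intro h
  have := hg ▸ isChain_nf g
  rw [nf_mul_gen_of_nf_eq hg] at h
  exact (List.isChain_append.mp this).2.2 k h k rfl rfl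

lemma nf_induction {P : Gam n → Prop} (one : P 1)
    (step : ∀ g w k, nf g = w ++ [k] → P (g * gen k) → P g) (g : Gam n) : P g := by
  suffices ∀ l g, nf g = l → P g from this _ g rfl
  intro l
  induction l using List.reverseRecOn with
  | nil => intro g hg; exact eq_one_of_nf_eq_nil hg ▸ one
  | append_singleton w k ih =>
    intro g hg
    exact step g w k hg (ih _ (nf_mul_gen_of_nf_eq hg))

end NormalForm

section Fibonacci

variable {n : ℕ}

lemma pairSub_mk_eq_closure_image (i j : Fin n) :
    pairSub s(i, j) = Subgroup.closure (gen '' {i, j}) := by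
  rw [Set.image_pair, pairSub_mk]

lemma mkGeo_mul_gen {i j k : Fin n} (hij : i ≠ j) (g : Gam n) (hk : k = i ∨ k = j) :
    mkGeo i j hij (g * gen k) = mkGeo i j hij g := by
  have : gen k ∈ pairSub s(i, j) := by
    rw [pairSub_mk_eq_closure_image]
    exact Subgroup.subset_closure ⟨k, hk, rfl⟩
  simp only [mkGeo, QuotientGroup.mk_mul_of_mem g this]

lemma mkGeo_comm {i j : Fin n} (hij : i ≠ j) (g : Gam n) :
    mkGeo i j hij g = mkGeo j i hij.symm g := by
  have key : ∀ p q : Sym2 (Fin n), p = q → ∀ hp hq,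
      (⟨p, hp, QuotientGroup.mk g⟩ : AltGeo n) = ⟨q, hq, QuotientGroup.mk g⟩ := by
    rintro p _ rfl _ _
    rfl
  exact key _ _ Sym2.eq_swap _ _

lemma AltGeo.exists_eq_mkGeo (γ : AltGeo n) :
    ∃ i j, ∃ (hij : i ≠ j) (g : Gam n), γ = mkGeo i j hij g := by
  obtain ⟨p, hp, c⟩ := γ
  induction p using Sym2.ind with | _ i j =>
  induction c using QuotientGroup.induction_on with | H g =>
  exact ⟨i, j, fun h => hp (Sym2.mk_isDiag_iff.mpr h), g, rfl⟩

/-- The vertex `g` of `[g;{i,j}]` is the one closest to the root as soon as the last letter of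
its reduced word is not `i` or `j`. -/
lemma glen_le_of_mk_eq {i j k : Fin n} {g h : Gam n} {w : List (Fin n)} (hg : nf g = w ++ [k])
    (hki : k ≠ i) (hkj : k ≠ j)
    (hh : (QuotientGroup.mk h : Gam n ⧸ pairSub s(i, j)) = QuotientGroup.mk g) :
    glen n g ≤ glen n h := by
  have ht : g⁻¹ * h ∈ Subgroup.closure (gen '' {i, j}) := by
    rw [← pairSub_mk_eq_closure_image]
    exact QuotientGroup.eq.mp hh.symm
  have hk : k ∉ ({i, j} : Set (Fin n)) := by simp [hki, hkj]
  rw [glen_eq_length_nf, glen_eq_length_nf, ← mul_inv_cancel_left g h,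
    nf_mul_of_mem_closure hg hk ht, List.length_append]
  exact Nat.le_add_right _ _

lemma mk_ne_mk_one {i j k : Fin n} {g : Gam n} {w : List (Fin n)} (hg : nf g = w ++ [k])
    (hki : k ≠ i) (hkj : k ≠ j) :
    (QuotientGroup.mk g : Gam n ⧸ pairSub s(i, j)) ≠ QuotientGroup.mk 1 := by
  intro h
  have hg' : g ∈ Subgroup.closure (gen '' {i, j}) := by
    rw [← pairSub_mk_eq_closure_image, ← inv_mem_iff, ← mul_one g⁻¹]
    exact QuotientGroup.eq.mp h
  have := mem_of_mem_nf hg' (hg ▸ List.mem_append_right w (List.mem_singleton_self k))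
  simp_all

namespace IsFib

variable {F : AltGeo n → ℕ}

lemma apply_mkGeo_one (hF : IsFib n F) {i j : Fin n} (hij : i ≠ j) : F (mkGeo i j hij 1) = 1 :=
  hF.1 _ rfl

lemma apply_mkGeo_eq_add (hF : IsFib n F) {i j k : Fin n} {g : Gam n} {w : List (Fin n)}
    (hg : nf g = w ++ [k]) (hij : i ≠ j) (hik : i ≠ k) (hjk : j ≠ k) :
    F (mkGeo i j hij g) = F (mkGeo i k hik g) + F (mkGeo j k hjk g) := by
  refine hF.2 (mkGeo i j hij g) (mk_ne_mk_one hg hik.symm hjk.symm) g rfl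
    (fun h hh => glen_le_of_mk_eq hg hik.symm hjk.symm hh) i j k rfl hik.symm hjk.symm ?_
  rw [glen_eq_length_nf, glen_eq_length_nf, nf_mul_gen_of_nf_eq hg, hg, List.length_append]
  exact Nat.lt_succ_self _

lemma one_le (hF : IsFib n F) (γ : AltGeo n) : 1 ≤ F γ := by
  obtain ⟨i, j, hij, g, rfl⟩ := γ.exists_eq_mkGeo
  induction g using nf_induction generalizing i j with
  | one => rw [hF.apply_mkGeo_one]
  | step g w k hg ih =>
    by_cases hk : k = i ∨ k = j
    · rw [← mkGeo_mul_gen hij g hk]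
      exact ih i j hij
    · push Not at hk
      rw [hF.apply_mkGeo_eq_add hg hij hk.1.symm hk.2.symm, ← mkGeo_mul_gen _ g (Or.inr rfl)]
      exact le_add_right (ih i k _)

/-- If `k` is not the last letter `k₀` of `g`, expanding the three values with the recursion at
`g` leaves the extra term `F[g;{k,k₀}] ≥ 1` on the right. -/
lemma lt_add (hF : IsFib n F) {i j k : Fin n} {g : Gam n} (hg : (nf g).getLast? ≠ some k)
    (hij : i ≠ j) (hik : i ≠ k) (hjk : j ≠ k) :
    F (mkGeo i j hij g) < F (mkGeo i k hik g) + F (mkGeo j k hjk g) := by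
  rcases List.eq_nil_or_concat (nf g) with hnil | ⟨w, k₀, hnf⟩
  · rw [eq_one_of_nf_eq_nil hnil, hF.apply_mkGeo_one, hF.apply_mkGeo_one, hF.apply_mkGeo_one]
    omega
  rw [List.concat_eq_append] at hnf
  have hkk₀ : k ≠ k₀ := by rintro rfl; simp [hnf] at hg
  have hk := hF.one_le (mkGeo k k₀ hkk₀ g)
  by_cases hi : i = k₀
  · subst hi
    rw [hF.apply_mkGeo_eq_add hnf hjk hij.symm hkk₀, mkGeo_comm hij.symm]
    have := hF.one_le (mkGeo i k hik g)
    omega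
  by_cases hj : j = k₀
  · subst hj
    rw [hF.apply_mkGeo_eq_add hnf hik hij hkk₀]
    have := hF.one_le (mkGeo j k hjk g)
    omega
  rw [hF.apply_mkGeo_eq_add hnf hij hi hj, hF.apply_mkGeo_eq_add hnf hik hi hkk₀,
    hF.apply_mkGeo_eq_add hnf hjk hj hkk₀]
  omega

lemma le_mul_sub_of_vertex_le (hF : IsFib n F) {f : AltGeo n → ℝ} {K c : ℝ} (hK : 0 ≤ K)
    (hcK : c ≤ K) (root : ∀ i j (hij : i ≠ j), f (mkGeo i j hij 1) ≤ K - c)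
    (vertex : ∀ (g : Gam n) (i j k : Fin n) (hij : i ≠ j) (hik : i ≠ k) (hjk : j ≠ k),
      f (mkGeo i j hij g) ≤
        max (f (mkGeo i k hik g) + f (mkGeo j k hjk g)) (f (mkGeo i j hij (g * gen k))) + c)
    (γ : AltGeo n) : f γ ≤ K * F γ - c := by
  obtain ⟨i, j, hij, g, rfl⟩ := γ.exists_eq_mkGeo
  induction g using nf_induction generalizing i j with
  | one => simpa [hF.apply_mkGeo_one] using root i j hij
  | step g w k hg ih =>
    by_cases hk : k = i ∨ k = j
    · rw [← mkGeo_mul_gen hij g hk]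
      exact ih i j hij
    push Not at hk
    obtain ⟨hik, hjk⟩ : i ≠ k ∧ j ≠ k := ⟨hk.1.symm, hk.2.symm⟩
    have hrec := hF.apply_mkGeo_eq_add hg hij hik hjk
    have hv := vertex g i j k hij hik hjk
    rw [← mkGeo_mul_gen hik g (Or.inr rfl), ← mkGeo_mul_gen hjk g (Or.inr rfl)] at hrec hv
    have hlt : (F (mkGeo i j hij (g * gen k)) : ℝ) + 1 ≤
        F (mkGeo i k hik (g * gen k)) + F (mkGeo j k hjk (g * gen k)) := by
      exact_mod_cast hF.lt_add (getLast?_nf_mul_gen_ne hg) hij hik hjk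
    have ih_ij := ih i j hij
    have ih_ik := ih i k hik
    have ih_jk := ih j k hjk
    rw [hrec, Nat.cast_add]
    refine hv.trans (le_sub_iff_add_le.mp (max_le ?_ ?_)) <;> nlinarith

end IsFib

end Fibonacci

section Hurwitz

variable {n : ℕ}

lemma act_mul_gen_inv_apply (g : Gam n) (k : Fin n) (a : Fin n → ℂ) :
    act n (g * gen k)⁻¹ a = bmap n k (act n g⁻¹ a) := by
  rw [mul_inv_rev, gen_inv, map_mul, Equiv.Perm.mul_apply, act_gen]
  rfl

/-- Writing `P = ∏_{m ∉ {i,j,k}} xₘ`, both sides equal `xᵢ xⱼ P²`. -/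
lemma prod_offPair_add_prod_offPair_bmap (x : Fin n → ℂ) {i j k : Fin n} (hij : i ≠ j)
    (hik : i ≠ k) (hjk : j ≠ k) :
    ∏ m ∈ offPair s(i, j), x m + ∏ m ∈ offPair s(i, j), bmap n k x m =
      (∏ m ∈ offPair s(i, k), x m) * ∏ m ∈ offPair s(j, k), x m := by
  set T := (offPair s(i, j)).erase k
  have hk : k ∈ offPair s(i, j) := by simp [offPair, hik.symm, hjk.symm]
  have hj : j ∈ offPair s(i, k) := by simp [offPair, hij.symm, hjk]
  have hi : i ∈ offPair s(j, k) := by simp [offPair, hij, hik]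
  have hTj : (offPair s(i, k)).erase j = T := by ext m; simp [T, offPair]; tauto
  have hTi : (offPair s(j, k)).erase i = T := by ext m; simp [T, offPair]; tauto
  have hTk : ((Finset.univ.erase k).erase i).erase j = T := by ext m; simp [T, offPair]; tauto
  have hbmap : ∏ m ∈ T, bmap n k x m = ∏ m ∈ T, x m :=
    Finset.prod_congr rfl fun m hm => bmap_apply_ne n k x (Finset.ne_of_mem_erase hm)
  rw [← Finset.mul_prod_erase _ _ hk, ← Finset.mul_prod_erase _ _ hk,
    ← Finset.mul_prod_erase _ _ hj, ← Finset.mul_prod_erase _ _ hi, hTj, hTi, hbmap,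
    bmap_apply_same, ← Finset.mul_prod_erase _ _ (by simp [hik] : i ∈ Finset.univ.erase k),
    ← Finset.mul_prod_erase _ _ (by simp [hij.symm, hjk] : j ∈ (Finset.univ.erase k).erase i),
    hTk]
  ring

lemma phiA_mkGeo_add_phiA_mkGeo_mul_gen (a : Fin n → ℂ) (g : Gam n) {i j k : Fin n}
    (hij : i ≠ j) (hik : i ≠ k) (hjk : j ≠ k) :
    phiA n a (mkGeo i j hij g) + phiA n a (mkGeo i j hij (g * gen k)) =
      phiA n a (mkGeo i k hik g) * phiA n a (mkGeo j k hjk g) := by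
  change phiRep n a _ g + phiRep n a _ (g * gen k) = phiRep n a _ g * phiRep n a _ g
  simp only [phiRep, act_mul_gen_inv_apply]
  exact prod_offPair_add_prod_offPair_bmap _ hij hik hjk

lemma posLog_phiA_mkGeo_one_le (a : Fin n → ℂ) {i j : Fin n} (hij : i ≠ j) :
    log⁺ ‖phiA n a (mkGeo i j hij 1)‖ ≤ ∑ m, log⁺ ‖a m‖ := by
  change log⁺ ‖∏ m ∈ offPair s(i, j), act n 1⁻¹ a m‖ ≤ _
  rw [inv_one, map_one, norm_prod]
  exact (posLog_prod _ _).trans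
    (Finset.sum_le_sum_of_subset_of_nonneg (Finset.subset_univ _) fun _ _ _ => posLog_nonneg)

end Hurwitz

theorem upper_fibonacci_bound_general (n : ℕ) (a : Fin n → ℂ) (F : AltGeo n → ℕ) (hF : IsFib n F) :
    ∃ K : ℝ, 0 < K ∧ ∃ C : ℝ, 0 < C ∧
      ∀ γ : AltGeo n, logp (‖phiA n a γ‖) ≤ K * (F γ : ℝ) + C := by
  set B := ∑ m, log⁺ ‖a m‖
  have hB : 0 ≤ B := Finset.sum_nonneg fun _ _ => posLog_nonneg
  have hlog2 : 0 < log 2 := log_pos one_lt_two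
  refine ⟨B + log 2, by positivity, 1, one_pos, fun γ => ?_⟩
  have hbound := hF.le_mul_sub_of_vertex_le (f := fun γ => log⁺ ‖phiA n a γ‖) (K := B + log 2)
    (by positivity) (by linarith)
    (fun i j hij => by rw [add_sub_cancel_right]; exact posLog_phiA_mkGeo_one_le a hij)
    (fun g i j k hij hik hjk => posLog_norm_le_of_add_eq_mul
      (phiA_mkGeo_add_phiA_mkGeo_mul_gen a g hij hik hjk)) γ
  change log⁺ _ ≤ _
  linarith

/-- **Upper Fibonacci bound.** For any `μ`-Hurwitz map, `log⁺|φ|` has an upper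
Fibonacci bound on `𝒜`. -/
theorem upper_fibonacci_bound (n : ℕ) (hn : 3 ≤ n) (μ : ℂ) (a : Fin n → ℂ)
    (ha : MH n a = μ) (F : AltGeo n → ℕ) (hF : IsFib n F) :
    ∃ K : ℝ, 0 < K ∧ ∃ C : ℝ, 0 < C ∧
      ∀ γ : AltGeo n, logp (‖phiA n a γ‖) ≤ K * (F γ : ℝ) + C :=
  upper_fibonacci_bound_general n a F hF

end MarkoffHurwitz
end
end

section
/- Let n ≥ 3 and let x ∈ ℂ with |x|^{n−2} > 2. Then the diagonal point (x, x, …, x) ∈ ℂⁿ lies in the Bowditch domain 𝒟. -/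
open scoped BigOperators

noncomputable section

namespace MarkoffHurwitz

/-! Every coordinate of every point in the orbit of `(x,…,x)` has modulus at least `|x|`:
along a reduced word the coordinate just flipped is always a largest one, since
`|∏_{j≠k} z_j| ≥ |z_m| |x|^{n-2} ≥ 2 |z_m|` with `m ≠ k` a largest coordinate, so the new value
`∏_{j≠k} z_j − z_k` has modulus at least `|z_m|`. Hence `|φ(γ)| ≥ |x|^{n-2} > 2` for every
alternating geodesic `γ`, which gives (B1) and makes `𝒜_φ(K)` empty for `2 < K < |x|^{n-2}`. -/

section

variable {n : ℕ}

lemma act_list_prod_cons (a : Fin n → ℂ) (k : Fin n) (l : List (Fin n)) :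
    act n ((k :: l).map gen).prod a = bmap n k (act n (l.map gen).prod a) := by
  rw [List.map_cons, List.prod_cons, map_mul, Equiv.Perm.mul_apply, act_gen]
  rfl

lemma exists_isChain_ne_prod_eq_gen_mul (i : Fin n) {l : List (Fin n)}
    (hl : l.IsChain (· ≠ ·)) :
    ∃ l' : List (Fin n), l'.IsChain (· ≠ ·) ∧ (l'.map gen).prod = gen i * (l.map gen).prod := by
  cases l with
  | nil => exact ⟨[i], .singleton i, by simp⟩
  | cons j t =>
    by_cases hij : i = j
    · subst hij
      refine ⟨t, hl.tail, ?_⟩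
      rw [List.map_cons, List.prod_cons, ← mul_assoc, gen_mul_self, one_mul]
    · exact ⟨i :: j :: t, List.isChain_cons_cons.mpr ⟨hij, hl⟩, rfl⟩

lemma exists_isChain_ne_prod_eq (g : Gam n) :
    ∃ l : List (Fin n), l.IsChain (· ≠ ·) ∧ (l.map gen).prod = g := by
  have hg : g ∈ Subgroup.closure (Set.range (gen (n := n))) := by
    rw [show Set.range (gen (n := n)) = Set.range PresentedGroup.of from rfl,
      PresentedGroup.closure_range_of]
    trivial
  induction hg using Subgroup.closure_induction_left with
  | one => exact ⟨[], .nil, rfl⟩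
  | mul_left _ hs y _ ih =>
    obtain ⟨i, rfl⟩ := hs
    obtain ⟨l, hl, rfl⟩ := ih
    exact exists_isChain_ne_prod_eq_gen_mul i hl
  | inv_mul_cancel _ hs y _ ih =>
    obtain ⟨i, rfl⟩ := hs
    obtain ⟨l, hl, rfl⟩ := ih
    rw [gen_inv]
    exact exists_isChain_ne_prod_eq_gen_mul i hl

lemma pow_card_le_prod_norm {ι : Type*} (s : Finset ι) (z : ι → ℂ) {r : ℝ} (hr : 0 ≤ r)
    (hz : ∀ j, r ≤ ‖z j‖) : r ^ s.card ≤ ∏ j ∈ s, ‖z j‖ := by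
  rw [← Finset.prod_const]
  exact Finset.prod_le_prod (fun _ _ => hr) fun j _ => hz j

lemma norm_le_norm_bmap_self {r : ℝ} (hr : 0 ≤ r) (hr2 : 2 ≤ r ^ (n - 2))
    {z : Fin n → ℂ} (hz : ∀ j, r ≤ ‖z j‖) {k m : Fin n} (hkm : k ≠ m)
    (hm : ∀ j, ‖z j‖ ≤ ‖z m‖) : ‖z m‖ ≤ ‖bmap n k z k‖ := by
  have hm_mem : m ∈ Finset.univ.erase k := Finset.mem_erase.mpr ⟨hkm.symm, Finset.mem_univ m⟩
  have hcard : ((Finset.univ.erase k).erase m).card = n - 2 := by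
    rw [Finset.card_erase_of_mem hm_mem, Finset.card_erase_of_mem (Finset.mem_univ k),
      Finset.card_univ, Fintype.card_fin, Nat.sub_sub]
  set Q := ∏ j ∈ (Finset.univ.erase k).erase m, ‖z j‖
  have hQ : 2 ≤ Q := hr2.trans (hcard ▸ pow_card_le_prod_norm _ z hr hz)
  have hprod : ‖∏ j ∈ Finset.univ.erase k, z j‖ = ‖z m‖ * Q := by
    rw [norm_prod, ← Finset.mul_prod_erase _ _ hm_mem]
  calc ‖z m‖ ≤ ‖z m‖ * Q - ‖z k‖ := by nlinarith [hm k, norm_nonneg (z m)]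
    _ = ‖∏ j ∈ Finset.univ.erase k, z j‖ - ‖z k‖ := by rw [hprod]
    _ ≤ ‖bmap n k z k‖ := bmap_apply_same n k z ▸ norm_sub_norm_le _ _

lemma norm_le_norm_act_list_prod_diag {x : ℂ} (hx : 2 ≤ ‖x‖ ^ (n - 2)) {l : List (Fin n)}
    (hl : l.IsChain (· ≠ ·)) :
    (∀ j, ‖x‖ ≤ ‖act n (l.map gen).prod (fun _ => x) j‖) ∧
      ∀ k ∉ l.head?, ∃ m ≠ k, ∀ j,
        ‖act n (l.map gen).prod (fun _ => x) j‖ ≤ ‖act n (l.map gen).prod (fun _ => x) m‖ := by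
  induction l with
  | nil =>
    have : Nontrivial (Fin n) := Fin.nontrivial_iff_two_le.mpr <| by
      by_contra! h
      rw [Nat.sub_eq_zero_of_le (by omega), pow_zero] at hx
      norm_num at hx
    refine ⟨fun _ => le_rfl, fun k _ => ?_⟩
    obtain ⟨m, hm⟩ := exists_ne k
    exact ⟨m, hm, fun _ => le_rfl⟩
  | cons k t ih =>
    obtain ⟨hk, ht⟩ := List.isChain_cons.mp hl
    obtain ⟨hlarge, hmax⟩ := ih ht
    obtain ⟨m, hkm, hm⟩ := hmax k fun hk' => hk k hk' rfl
    set z := act n (t.map gen).prod (fun _ => x)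
    have hnew : ‖z m‖ ≤ ‖bmap n k z k‖ :=
      norm_le_norm_bmap_self (norm_nonneg x) hx hlarge hkm.symm hm
    have hbmap_le : ∀ j, ‖bmap n k z j‖ ≤ ‖bmap n k z k‖ := fun j => by
      rcases eq_or_ne j k with rfl | hjk
      · exact le_rfl
      · rw [bmap_apply_ne n k z hjk]; exact (hm j).trans hnew
    rw [act_list_prod_cons]
    refine ⟨fun j => ?_, fun k' hk' => ⟨k, fun h => hk' (h ▸ rfl), hbmap_le⟩⟩
    rcases eq_or_ne j k with rfl | hjk
    · exact (hlarge m).trans hnew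
    · rw [bmap_apply_ne n k z hjk]; exact hlarge j

lemma norm_le_norm_act_diag {x : ℂ} (hx : 2 ≤ ‖x‖ ^ (n - 2)) (g : Gam n) (j : Fin n) :
    ‖x‖ ≤ ‖act n g (fun _ => x) j‖ := by
  obtain ⟨l, hl, rfl⟩ := exists_isChain_ne_prod_eq g
  exact (norm_le_norm_act_list_prod_diag hx hl).1 j

lemma card_offPair {s : Sym2 (Fin n)} (h : ¬ s.IsDiag) : (offPair s).card = n - 2 := by
  induction s using Sym2.ind with
  | _ i j =>
    have he : offPair s(i, j) = ({i, j} : Finset (Fin n))ᶜ := by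
      ext k
      simp [offPair, Sym2.mem_iff, not_or]
    rw [he, Finset.card_compl, Finset.card_pair (by simpa using h), Fintype.card_fin]

lemma pow_le_norm_phiA {a : Fin n → ℂ} {r : ℝ} (hr : 0 ≤ r)
    (ha : ∀ g j, r ≤ ‖act n g a j‖) (γ : AltGeo n) : r ^ (n - 2) ≤ ‖phiA n a γ‖ := by
  obtain ⟨s, hs, c⟩ := γ
  induction c using QuotientGroup.induction_on with
  | H g =>
    change r ^ (n - 2) ≤ ‖∏ k ∈ offPair s, act n g⁻¹ a k‖
    rw [norm_prod, ← card_offPair hs]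
    exact pow_card_le_prod_norm _ _ hr (ha g⁻¹)

lemma mem_BD_of_le_norm_phiA {a : Fin n → ℂ} {c : ℝ} (hc : 2 < c)
    (ha : ∀ γ, c ≤ ‖phiA n a γ‖) : a ∈ BD n := by
  refine ⟨fun γ ⟨t, ht, heq⟩ => ?_, (2 + c) / 2, by linarith, ?_⟩
  · have := ha γ
    rw [← heq, Complex.norm_real, Real.norm_eq_abs] at this
    linarith [abs_le.mpr ⟨ht.1, ht.2⟩]
  · convert Set.finite_empty
    refine Set.eq_empty_iff_forall_notMem.mpr fun γ (hγ : ‖phiA n a γ‖ ≤ (2 + c) / 2) => ?_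
    linarith [ha γ]

end

theorem diagonal_in_bowditch_general (n : ℕ) (x : ℂ)
    (hx : 2 < ‖x‖ ^ (n - 2)) :
    (fun _ : Fin n => x) ∈ BD n :=
  mem_BD_of_le_norm_phiA hx fun γ =>
    pow_le_norm_phiA (norm_nonneg x) (norm_le_norm_act_diag hx.le) γ

/-- If `|x|^{n−2} > 2` then the diagonal point `(x,…,x)` lies in the Bowditch domain. -/
theorem diagonal_in_bowditch (n : ℕ) (hn : 3 ≤ n) (x : ℂ)
    (hx : 2 < ‖x‖ ^ (n - 2)) :
    (fun _ : Fin n => x) ∈ BD n :=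
  diagonal_in_bowditch_general n x hx

end MarkoffHurwitz
end
end
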